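/- (Clean increment bound under the linesearch) Fix λ > 0 and x ∈ ℝ^d, and set x⁺ = x − λG_λ(x). If the composite linesearch condition holds at x with stepsize λ, then for every z ∈ ℝ^d: F(x⁺) ≤ F(z) − (1/(2λ))‖x⁺ − x‖² − (1/λ)⟨x⁺ − x, x − z⟩. -/

import Mathlib

open RealInnerProductSpace

-- gradient inequality for convex differentiable f
lemma grad_ineq {d : ℕ} (f : EuclideanSpace ℝ (Fin d) → ℝ)
    (hconv : ConvexOn ℝ Set.univ f) (hdiff : Differentiable ℝ f)
    (x y : EuclideanSpace ℝ (Fin d)) :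
    f x + ⟪gradient f x, y - x⟫ ≤ f y := by
  set v := y - x with hv
  have hL : HasFDerivAt f ((InnerProductSpace.toDual ℝ _) (gradient f x)) x :=
    hasGradientAt_iff_hasFDerivAt.1 (hdiff x).hasGradientAt
  have hline : HasDerivAt (fun t : ℝ => x + t • v) v 0 := by
    simpa using ((hasDerivAt_id (0:ℝ)).smul_const v).const_add x
  have hg : HasDerivAt (fun t : ℝ => f (x + t • v)) ⟪gradient f x, v⟫ 0 := by
    have hL' : HasFDerivAt f ((InnerProductSpace.toDual ℝ _) (gradient f x)) ((0:ℝ) • v + x) := by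
      simpa using hL
    have := hL'.comp_hasDerivAt (f := fun t : ℝ => t • v + x) (x := (0:ℝ))
      (by simpa using ((hasDerivAt_id (0:ℝ)).smul_const v).add_const x)
    have e : (fun t : ℝ => f (x + t • v)) = f ∘ fun t : ℝ => t • v + x := by
      funext t; simp [Function.comp, add_comm]
    rw [e]; exact this
  have gconv : ConvexOn ℝ Set.univ (fun t : ℝ => f (x + t • v)) := by
    have := hconv.comp_affineMap (AffineMap.lineMap x y)
    have heq : (fun t : ℝ => f (x + t • v)) = f ∘ (AffineMap.lineMap x y) := by
      funext t
      simp [AffineMap.lineMap_apply, hv]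
      congr 1
      module
    rw [heq]
    simpa using this
  have key := gconv.le_slope_of_hasDerivAt (Set.mem_univ (0:ℝ)) (Set.mem_univ (1:ℝ))
    (by norm_num) hg
  rw [slope_def_field] at key
  simp only [one_smul, zero_smul, add_zero, sub_zero, div_one, add_sub_cancel, hv] at key
  linarith

-- subgradient inequality at a prox point
lemma prox_subgrad {d : ℕ} (h : EuclideanSpace ℝ (Fin d) → ℝ)
    (hh_conv : ConvexOn ℝ Set.univ h) (lam : ℝ) (hlam : 0 < lam)
    (y p : EuclideanSpace ℝ (Fin d))
    (hp : ∀ u, h p + (1 / (2 * lam)) * ‖p - y‖ ^ 2 ≤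
          h u + (1 / (2 * lam)) * ‖u - y‖ ^ 2)
    (z : EuclideanSpace ℝ (Fin d)) :
    h p ≤ h z + (1 / lam) * ⟪p - y, z - p⟫ := by
  set c : ℝ := 1 / (2 * lam) with hc
  have hcpos : 0 < c := by positivity
  have hstep : ∀ t : ℝ, 0 < t → t ≤ 1 →
      h p ≤ h z + 2 * c * ⟪p - y, z - p⟫ + c * t * ‖z - p‖ ^ 2 := by
    intro t ht ht1
    have hmem := hh_conv.2 (Set.mem_univ p) (Set.mem_univ z)
      (by linarith : (0:ℝ) ≤ 1 - t) (le_of_lt ht) (by ring)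
    rw [smul_eq_mul, smul_eq_mul] at hmem
    have hkey := hp ((1 - t) • p + t • z)
    have hnorm : ‖(1 - t) • p + t • z - y‖ ^ 2
        = ‖p - y‖ ^ 2 + 2 * t * ⟪p - y, z - p⟫ + t ^ 2 * ‖z - p‖ ^ 2 := by
      have hexp : (1 - t) • p + t • z - y = (p - y) + t • (z - p) := by module
      rw [hexp, norm_add_sq_real, real_inner_smul_right, norm_smul]
      simp [mul_pow, abs_of_pos ht]
      ring
    rw [hnorm] at hkey
    have := hkey.trans (by linarith [hmem] : h ((1 - t) • p + t • z)
        + c * (‖p - y‖ ^ 2 + 2 * t * ⟪p - y, z - p⟫ + t ^ 2 * ‖z - p‖ ^ 2)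
        ≤ (1 - t) * h p + t * h z
        + c * (‖p - y‖ ^ 2 + 2 * t * ⟪p - y, z - p⟫ + t ^ 2 * ‖z - p‖ ^ 2))
    -- this : h p + c‖p-y‖² ≤ (1-t) h p + t h z + c (...)
    have ht' : t * h p ≤ t * h z + c * (2 * t * ⟪p - y, z - p⟫ + t ^ 2 * ‖z - p‖ ^ 2) := by
      nlinarith [this]
    have := (mul_le_mul_iff_right₀ ht).mp (by nlinarith [ht'] :
      t * h p ≤ t * (h z + 2 * c * ⟪p - y, z - p⟫ + c * t * ‖z - p‖ ^ 2))
    linarith [this]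
  have hmain : h p ≤ h z + 2 * c * ⟪p - y, z - p⟫ := by
    refine le_of_forall_pos_le_add (fun ε hε => ?_)
    have hden : (0:ℝ) < c * ‖z - p‖ ^ 2 + 1 := by positivity
    set t : ℝ := min 1 (ε / (c * ‖z - p‖ ^ 2 + 1)) with htdef
    have htpos : 0 < t := lt_min one_pos (by positivity)
    have ht1 : t ≤ 1 := min_le_left _ _
    have ht2 : t ≤ ε / (c * ‖z - p‖ ^ 2 + 1) := min_le_right _ _
    have := hstep t htpos ht1
    have hbound : c * t * ‖z - p‖ ^ 2 ≤ ε := by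
      have h1 : t * (c * ‖z - p‖ ^ 2 + 1) ≤ ε := (le_div_iff₀ hden).mp ht2
      nlinarith [htpos.le, hcpos.le, sq_nonneg ‖z - p‖]
    linarith
  have : 2 * c = 1 / lam := by rw [hc]; field_simp
  rw [← this]; exact hmain


/-- Clean increment bound under the linesearch: Fix λ > 0 and x ∈ ℝ^d, and
set x⁺ = x − λG_λ(x). If the composite linesearch condition holds at x with stepsize λ,
then for every z ∈ ℝ^d: F(x⁺) ≤ F(z) − (1/(2λ))‖x⁺ − x‖² − (1/λ)⟨x⁺ − x, x − z⟩,
where F = f + h and G_λ(x) = (1/λ)(x − prox_{λh}(x − λ∇f(x))). -/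
theorem stmt_10 {d : ℕ} (f h : EuclideanSpace ℝ (Fin d) → ℝ)
    (hf_conv : ConvexOn ℝ Set.univ f) (hf_diff : Differentiable ℝ f)
    (hh_conv : ConvexOn ℝ Set.univ h)
    (lam : ℝ) (hlam : 0 < lam)
    (x p G xplus : EuclideanSpace ℝ (Fin d))
    (hp : ∀ u, h p + (1 / (2 * lam)) * ‖p - (x - lam • gradient f x)‖ ^ 2 ≤
          h u + (1 / (2 * lam)) * ‖u - (x - lam • gradient f x)‖ ^ 2)
    (hG : G = lam⁻¹ • (x - p))
    (hxplus : xplus = x - lam • G)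
    (hls : f (x - (2 * lam) • G) ≤ f (x - lam • G)
            - lam * ⟪G, gradient f x⟫ + (lam / 2) * ‖G‖ ^ 2) :
    ∀ z, f xplus + h xplus ≤ (f z + h z)
      - (1 / (2 * lam)) * ‖xplus - x‖ ^ 2 - (1 / lam) * ⟪xplus - x, x - z⟫ := by
  intro z
  have hlam' : lam ≠ 0 := hlam.ne'
  set D := gradient f x with hD
  have hpx : p = x - lam • G := by
    rw [hG, smul_smul, mul_inv_cancel₀ hlam', one_smul]; module
  have hxp : xplus = p := by rw [hxplus, hpx]
  -- sufficient decrease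
  have mid : p = (1/2 : ℝ) • x + (1/2 : ℝ) • (x - (2 * lam) • G) := by
    rw [hpx]; module
  have hmidineq : f p ≤ (1/2) * f x + (1/2) * f (x - (2 * lam) • G) := by
    have := hf_conv.2 (Set.mem_univ x) (Set.mem_univ (x - (2 * lam) • G))
      (by norm_num : (0:ℝ) ≤ 1/2) (by norm_num : (0:ℝ) ≤ 1/2) (by norm_num)
    rw [← mid] at this
    simpa [smul_eq_mul] using this
  rw [← hpx] at hls
  have I2 : f p ≤ f x - lam * ⟪G, D⟫ + (lam / 2) * ‖G‖ ^ 2 := by linarith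
  -- gradient inequality
  have I1 : f x + ⟪D, z - x⟫ ≤ f z := grad_ineq f hf_conv hf_diff x z
  -- subgradient inequality
  have I3 : h p ≤ h z + (1 / lam) * ⟪p - (x - lam • D), z - p⟫ :=
    prox_subgrad h hh_conv lam hlam (x - lam • D) p hp z
  -- scalar expansions
  have E3 : (1 / lam) * ⟪p - (x - lam • D), z - p⟫
      = -⟪G, z - x⟫ - lam * ‖G‖ ^ 2 + ⟪D, z - x⟫ + lam * ⟪G, D⟫ := by
    have hvec : p - (x - lam • D) = lam • (D - G) := by rw [hpx]; module
    have hvec2 : z - p = (z - x) + lam • G := by rw [hpx]; module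
    rw [hvec, hvec2, real_inner_smul_left, inner_add_right, real_inner_smul_right,
      inner_sub_left, inner_sub_left, real_inner_self_eq_norm_sq, real_inner_comm G D]
    field_simp
    ring
  have E1 : ‖xplus - x‖ ^ 2 = lam ^ 2 * ‖G‖ ^ 2 := by
    have : xplus - x = -(lam • G) := by rw [hxplus]; module
    rw [this, norm_neg, norm_smul]
    simp [mul_pow, abs_of_pos hlam]
  have E2 : ⟪xplus - x, x - z⟫ = lam * ⟪G, z - x⟫ := by
    have h1 : xplus - x = -(lam • G) := by rw [hxplus]; module
    have h2 : x - z = -(z - x) := by module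
    rw [h1, h2, inner_neg_neg, real_inner_smul_left]
  rw [hxp] at E1 E2
  rw [hxp, E1, E2]
  have C1 : (1 / (2 * lam)) * (lam ^ 2 * ‖G‖ ^ 2) = (lam / 2) * ‖G‖ ^ 2 := by
    field_simp
  have C2 : (1 / lam) * (lam * ⟪G, z - x⟫) = ⟪G, z - x⟫ := by
    field_simp
  rw [E3] at I3
  linarith
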